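/- arXiv:1007.4034 — 5 statements merged into one kernel-verified Lean document; each statement's English description precedes it below -/
import Mathlib

section
/- Let T be a metric ω₁-tree and ε > 0. The following are equivalent: (1) T has an ε-branch; (2) there is a subset B of T intersecting cofinally many levels such that ρ(x,y) ≤ ε for all x, y in B; (3) T has a subtree of ρ-diameter at most ε. -/
open Ordinal

/-- The set of countable ordinals, i.e. ordinals below `ω₁`. -/
def Omega1 : Type _ := {o : Ordinal // o < ω₁}

noncomputable instance : LinearOrder Omega1 := Subtype.instLinearOrder _

/-- A metric ω₁-tree: a family of complete metric spaces `X α` for `α < ω₁` together with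
commuting contractive surjective projections `π : X β → X α` for `α ≤ β`. -/
structure MetricOmega1Tree where
  X : Omega1 → Type
  met : ∀ α, MetricSpace (X α)
  complete : ∀ α, @CompleteSpace (X α) (met α).toUniformSpace
  proj : ∀ {α β : Omega1}, α ≤ β → X β → X α
  proj_surj : ∀ {α β : Omega1} (h : α ≤ β), Function.Surjective (proj h)
  proj_contr : ∀ {α β : Omega1} (h : α ≤ β) (x y : X β),
    (met α).dist (proj h x) (proj h y) ≤ (met β).dist x y
  proj_comm : ∀ {α β γ : Omega1} (hαβ : α ≤ β) (hβγ : β ≤ γ) (x : X γ),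
    proj hαβ (proj hβγ x) = proj (hαβ.trans hβγ) x
  proj_id : ∀ (α : Omega1) (x : X α), proj (le_refl α) x = x

namespace MetricOmega1Tree

variable (T : MetricOmega1Tree)

/-- The map ρ on pairs of elements of the tree: the distance between the projections to the
minimum of the two levels. -/
noncomputable def rho {α β : Omega1} (x : T.X α) (y : T.X β) : ℝ :=
  (T.met (min α β)).dist (T.proj (min_le_left α β) x) (T.proj (min_le_right α β) y)

/-- An ε-branch of a metric ω₁-tree: a choice of a point on each level, any two of which are
at ρ-distance at most ε. -/
def IsEpsBranch (ε : ℝ) (x : ∀ α, T.X α) : Prop :=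
  ∀ α β : Omega1, T.rho (x α) (x β) ≤ ε

/-- A (cofinal) branch: an element of the inverse limit of the system. -/
def IsBranch (x : ∀ α, T.X α) : Prop :=
  ∀ {α β : Omega1} (h : α ≤ β), T.proj h (x β) = x α

/-- A subtree: a family of nonempty level sets closed under the projection maps. -/
structure IsSubtree (S : ∀ α, Set (T.X α)) : Prop where
  nonempty : ∀ α, (S α).Nonempty
  proj_mem : ∀ {α β : Omega1} (h : α ≤ β), ∀ x ∈ S β, T.proj h x ∈ S α

end MetricOmega1Tree


theorem MetricOmega1Tree.rho_proj_le (T : MetricOmega1Tree) {α β γ δ : Omega1}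
    (h1 : α ≤ γ) (h2 : β ≤ δ) (b : T.X γ) (c : T.X δ) :
    T.rho (T.proj h1 b) (T.proj h2 c) ≤ T.rho b c := by
  unfold MetricOmega1Tree.rho
  have hμν : min α β ≤ min γ δ := min_le_min h1 h2
  have e1 : T.proj (min_le_left α β) (T.proj h1 b)
      = T.proj hμν (T.proj (min_le_left γ δ) b) := by
    rw [T.proj_comm, T.proj_comm]
  have e2 : T.proj (min_le_right α β) (T.proj h2 c)
      = T.proj hμν (T.proj (min_le_right γ δ) c) := by
    rw [T.proj_comm, T.proj_comm]
  rw [e1, e2]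
  exact T.proj_contr hμν _ _

open MetricOmega1Tree in
/-- equivalent characterizations of having an ε-branch. -/
theorem epsBranch_tfae (T : MetricOmega1Tree) (ε : ℝ) (hε : 0 < ε) :
    ((∃ x : ∀ α, T.X α, T.IsEpsBranch ε x) ↔
      (∃ B : Set (Σ α, T.X α), (∀ α : Omega1, ∃ b ∈ B, α ≤ b.1) ∧
        ∀ b ∈ B, ∀ c ∈ B, T.rho b.2 c.2 ≤ ε)) ∧
    ((∃ x : ∀ α, T.X α, T.IsEpsBranch ε x) ↔
      (∃ S : ∀ α, Set (T.X α), T.IsSubtree S ∧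
        ∀ (α β : Omega1) (x : T.X α) (y : T.X β), x ∈ S α → y ∈ S β → T.rho x y ≤ ε)) := by
  have h12 : (∃ x : ∀ α, T.X α, T.IsEpsBranch ε x) →
      (∃ B : Set (Σ α, T.X α), (∀ α : Omega1, ∃ b ∈ B, α ≤ b.1) ∧
        ∀ b ∈ B, ∀ c ∈ B, T.rho b.2 c.2 ≤ ε) := by
    rintro ⟨x, hx⟩
    refine ⟨Set.range (fun α => ⟨α, x α⟩), fun α => ⟨⟨α, x α⟩, ⟨α, rfl⟩, le_refl α⟩, ?_⟩
    rintro b ⟨α, rfl⟩ c ⟨β, rfl⟩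
    exact hx α β
  have h23 : (∃ B : Set (Σ α, T.X α), (∀ α : Omega1, ∃ b ∈ B, α ≤ b.1) ∧
        ∀ b ∈ B, ∀ c ∈ B, T.rho b.2 c.2 ≤ ε) →
      (∃ S : ∀ α, Set (T.X α), T.IsSubtree S ∧
        ∀ (α β : Omega1) (x : T.X α) (y : T.X β), x ∈ S α → y ∈ S β → T.rho x y ≤ ε) := by
    rintro ⟨B, hcof, hB⟩
    refine ⟨fun α => {z | ∃ b ∈ B, ∃ h : α ≤ b.1, z = T.proj h b.2}, ⟨?_, ?_⟩, ?_⟩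
    · intro α
      obtain ⟨b, hb, hab⟩ := hcof α
      exact ⟨T.proj hab b.2, b, hb, hab, rfl⟩
    · rintro α β h x ⟨b, hb, h', rfl⟩
      exact ⟨b, hb, h.trans h', T.proj_comm h h' b.2⟩
    · rintro α β x y ⟨b, hb, h1, rfl⟩ ⟨c, hc, h2, rfl⟩
      exact le_trans (T.rho_proj_le h1 h2 b.2 c.2) (hB b hb c hc)
  have h31 : (∃ S : ∀ α, Set (T.X α), T.IsSubtree S ∧
        ∀ (α β : Omega1) (x : T.X α) (y : T.X β), x ∈ S α → y ∈ S β → T.rho x y ≤ ε) →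
      (∃ x : ∀ α, T.X α, T.IsEpsBranch ε x) := by
    rintro ⟨S, hS, hd⟩
    choose x hx using hS.nonempty
    exact ⟨x, fun α β => hd α β _ _ (hx α) (hx β)⟩
  exact ⟨⟨h12, fun h => h31 (h23 h)⟩, ⟨fun h => h23 (h12 h), h31⟩⟩
end

section
/- If a metric ω₁-tree T is ε-special, then T has no ε/2-branches. -/
open Ordinal

namespace MetricOmega1Tree

variable (T : MetricOmega1Tree)

/-- An ε-antichain: a set of elements of the tree with pairwise ρ-distance > ε. -/
def IsEpsAntichain (ε : ℝ) (A : Set (Σ α, T.X α)) : Prop :=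
  ∀ b ∈ A, ∀ c ∈ A, b ≠ c → T.rho b.2 c.2 > ε

/-- T is ε-special if there are countably many ε-antichains whose union meets each level in a
dense set. -/
def IsEpsSpecial (ε : ℝ) : Prop :=
  ∃ A : ℕ → Set (Σ α, T.X α), (∀ n, T.IsEpsAntichain ε (A n)) ∧
    ∀ α : Omega1, @Dense (T.X α) (T.met α).toUniformSpace.toTopologicalSpace
      {x : T.X α | ∃ n, (⟨α, x⟩ : Σ α, T.X α) ∈ A n}

end MetricOmega1Tree

/-- an ε-special metric ω₁-tree has no ε/2-branches. -/
theorem no_half_eps_branch_of_epsSpecial (T : MetricOmega1Tree) (ε : ℝ) (hε : 0 < ε)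
    (h : T.IsEpsSpecial ε) :
    ¬ ∃ x : ∀ α, T.X α, T.IsEpsBranch (ε / 2) x := by
  rintro ⟨x, hx⟩
  obtain ⟨A, hA, hdense⟩ := h
  have key : ∀ α : Omega1, ∃ n : ℕ, ∃ y : T.X α,
      (⟨α, y⟩ : Σ α, T.X α) ∈ A n ∧ (T.met α).dist y (x α) < ε / 4 := by
    intro α
    letI := T.met α
    have hd := hdense α
    rw [Metric.dense_iff] at hd
    obtain ⟨y, hy1, hy2⟩ := hd (x α) (ε / 4) (by linarith)
    obtain ⟨m, hm⟩ := hy2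
    exact ⟨m, y, hm, by simpa [Metric.mem_ball] using hy1⟩
  choose n y hyA hyd using key
  have hnotinj : ¬ Function.Injective n := by
    intro hinj
    haveI hc : Countable Omega1 := ⟨⟨n, hinj⟩⟩
    have h1 : Cardinal.mk (Set.Iio (ω₁ : Ordinal)) ≤ Cardinal.aleph0 := @Cardinal.mk_le_aleph0 _ hc
    rw [Ordinal.mk_Iio_ordinal, show (ω₁ : Ordinal).card = Cardinal.aleph 1 from Ordinal.card_omega 1,
      Cardinal.lift_le_aleph0, ← not_lt] at h1
    exact h1 Cardinal.aleph0_lt_aleph_one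
  rw [Function.not_injective_iff] at hnotinj
  obtain ⟨α, β, hnab, hne⟩ := hnotinj
  have hmemβ : (⟨β, y β⟩ : Σ α, T.X α) ∈ A (n α) := hnab ▸ hyA β
  have hsne : (⟨α, y α⟩ : Σ α, T.X α) ≠ ⟨β, y β⟩ := by
    intro hc
    exact hne (congrArg Sigma.fst hc)
  have hgt : T.rho (y α) (y β) > ε := hA (n α) ⟨α, y α⟩ (hyA α) ⟨β, y β⟩ hmemβ hsne
  have hle : T.rho (y α) (y β) ≤ ε := by
    letI := T.met (min α β)
    have h1 : (T.met (min α β)).dist (T.proj (min_le_left α β) (y α))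
        (T.proj (min_le_left α β) (x α)) ≤ (T.met α).dist (y α) (x α) :=
      T.proj_contr _ _ _
    have h2 : (T.met (min α β)).dist (T.proj (min_le_right α β) (x β))
        (T.proj (min_le_right α β) (y β)) ≤ (T.met β).dist (x β) (y β) :=
      T.proj_contr _ _ _
    have h3 : T.rho (x α) (x β) ≤ ε / 2 := hx α β
    have hd1 := hyd α
    have hd2 : (T.met β).dist (x β) (y β) < ε / 4 := by
      have := hyd β
      rw [(T.met β).dist_comm] at this
      exact this
    have htri : (T.met (min α β)).dist (T.proj (min_le_left α β) (y α))
        (T.proj (min_le_right α β) (y β)) ≤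
        (T.met (min α β)).dist (T.proj (min_le_left α β) (y α))
          (T.proj (min_le_left α β) (x α)) +
        (T.met (min α β)).dist (T.proj (min_le_left α β) (x α))
          (T.proj (min_le_right α β) (x β)) +
        (T.met (min α β)).dist (T.proj (min_le_right α β) (x β))
          (T.proj (min_le_right α β) (y β)) :=
      dist_triangle4 _ _ _ _
    unfold MetricOmega1Tree.rho at h3 ⊢
    linarith
  linarith
end

section
/- There exists a Polish Aronszajn tree (a metric ω₁-tree with separable levels and empty inverse limit) which has an ε-branch for every ε > 0 but has no branch. Concretely: given a special Aronszajn tree T₀ (in the classical discrete sense), let X_α be the disjoint union of countably many copies of the α-th level of T₀ with the metric in which the n-th copy has diameter 1/n and distinct copies are at distance 1; with the natural projection maps this Polish ω₁-tree contains a 1/n-branch for every n but no cofinal branch. -/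
/-
Start from the classical Aronszajn tree whose level `α` is a countable set of strictly increasing
bounded rational sequences of length `α`, closed under restriction and such that every node extends
to every higher level while staying below any rational bound it already stays below. At limit
levels these extensions are obtained by gluing ω-chains of extensions that keep the same bound,
so the glued sequence stays bounded. A cofinal branch would be an order embedding of `ω₁` into `ℚ`.

Replace every level by countably many copies of itself, the `n`-th copy carrying the discrete
metric scaled to `1 / (n + 1)`, distinct copies being at distance `1`. A Cauchy sequence eventually
stays in one copy and is then eventually constant, so the levels are complete and countable.
Picking any node on each level and keeping the `n`-th copy gives a `1 / (n + 1)`-branch, whereas a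
branch of the metric tree projects to a cofinal branch of the Aronszajn tree.
-/

open Ordinal

open Ordinal Order Cardinal

structure AronszajnSystem where
  Y : Omega1 → Type
  countable : ∀ α, Countable (Y α)
  nonempty : ∀ α, Nonempty (Y α)
  proj : ∀ {α β : Omega1}, α ≤ β → Y β → Y α
  proj_surj : ∀ {α β : Omega1} (h : α ≤ β), Function.Surjective (proj h)
  proj_comm : ∀ {α β γ : Omega1} (hαβ : α ≤ β) (hβγ : β ≤ γ) (y : Y γ),
    proj hαβ (proj hβγ y) = proj (hαβ.trans hβγ) y
  proj_id : ∀ (α : Omega1) (y : Y α), proj (le_refl α) y = y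
  not_exists_thread : ¬ ∃ y : ∀ α, Y α, ∀ ⦃α β : Omega1⦄ (h : α ≤ β), proj h (y β) = y α

/-- `(y, n)` is `y` in the `n`-th copy, which has diameter `1 / (n + 1)`: the paper's copy of
diameter `1 / n` has index `n - 1` here. -/
def ShrinkingCopies (Y : Type) : Type := Y × ℕ

namespace ShrinkingCopies

variable {Y Z : Type}

open Classical in
noncomputable instance : Dist (ShrinkingCopies Y) :=
  ⟨fun x y => if x = y then 0 else if x.2 = y.2 then 1 / (x.2 + 1 : ℝ) else 1⟩

open Classical in
lemma dist_def (x y : ShrinkingCopies Y) :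
    dist x y = if x = y then 0 else if x.2 = y.2 then 1 / (x.2 + 1 : ℝ) else 1 := rfl

lemma one_div_succ_le_one (n : ℕ) : 1 / (n + 1 : ℝ) ≤ 1 := by
  rw [div_le_one (by positivity)]; linarith [n.cast_nonneg (α := ℝ)]

lemma dist_nonneg' (x y : ShrinkingCopies Y) : 0 ≤ dist x y := by
  rw [dist_def]; split_ifs <;> positivity

lemma dist_le_max (x y z : ShrinkingCopies Y) : dist x z ≤ max (dist x y) (dist y z) := by
  have := one_div_succ_le_one
  simp only [dist_def]
  split_ifs <;> simp_all; positivity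

noncomputable instance : MetricSpace (ShrinkingCopies Y) where
  dist_self x := by simp [dist_def]
  dist_comm x y := by
    simp only [dist_def, eq_comm]
    split_ifs <;> simp_all
  dist_triangle x y z :=
    (dist_le_max x y z).trans (max_le_add_of_nonneg (dist_nonneg' x y) (dist_nonneg' y z))
  eq_of_dist_eq_zero {x y} h := by
    rw [dist_def] at h
    split_ifs at h <;> simp_all [Nat.cast_add_one_ne_zero]

lemma dist_le_of_snd_eq {x y : ShrinkingCopies Y} (h : x.2 = y.2) :
    dist x y ≤ 1 / (x.2 + 1) := by
  rw [dist_def]; split_ifs <;> simp_all; positivity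

lemma snd_eq_of_dist_lt_one {x y : ShrinkingCopies Y} (h : dist x y < 1) : x.2 = y.2 := by
  rw [dist_def] at h; split_ifs at h <;> simp_all

lemma eq_of_dist_lt {x y : ShrinkingCopies Y} (h : dist x y < 1 / (x.2 + 1)) : x = y := by
  have := one_div_succ_le_one x.2
  rw [dist_def] at h; split_ifs at h <;> simp_all; linarith

instance : CompleteSpace (ShrinkingCopies Y) := by
  refine Metric.complete_of_cauchySeq_tendsto fun u hu => ?_
  rw [Metric.cauchySeq_iff'] at hu
  obtain ⟨N₁, hN₁⟩ := hu 1 one_pos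
  obtain ⟨N₂, hN₂⟩ := hu (1 / ((u N₁).2 + 1)) (by positivity)
  refine ⟨u N₂, tendsto_atTop_of_eventually_const (i₀ := max N₁ N₂) fun n hn => ?_⟩
  have hsnd : (u n).2 = (u N₁).2 := snd_eq_of_dist_lt_one (hN₁ n (le_of_max_le_left hn))
  exact eq_of_dist_lt (hsnd ▸ hN₂ n (le_of_max_le_right hn))

instance [Countable Y] : Countable (ShrinkingCopies Y) := inferInstanceAs (Countable (Y × ℕ))

def map (f : Y → Z) : ShrinkingCopies Y → ShrinkingCopies Z := Prod.map f id

lemma dist_map_le (f : Y → Z) (x y : ShrinkingCopies Y) : dist (map f x) (map f y) ≤ dist x y := by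
  by_cases hxy : x = y
  · simp [hxy]
  by_cases h : x.2 = y.2
  · rw [dist_def x y, if_neg hxy, if_pos h]; exact dist_le_of_snd_eq h
  · have hne : map f x ≠ map f y := fun he => h (congrArg (·.2) he)
    rw [dist_def, dist_def, if_neg hxy, if_neg h, if_neg hne]
    exact ite_le_one (one_div_succ_le_one _) le_rfl

end ShrinkingCopies

namespace AronszajnSystem

variable (A : AronszajnSystem)

noncomputable def metricTree : MetricOmega1Tree where
  X α := ShrinkingCopies (A.Y α)
  met _ := inferInstance
  complete _ := inferInstance
  proj h := ShrinkingCopies.map (A.proj h)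
  proj_surj h := (A.proj_surj h).prodMap Function.surjective_id
  proj_contr h := ShrinkingCopies.dist_map_le (A.proj h)
  proj_comm h₁ h₂ x := Prod.ext (A.proj_comm h₁ h₂ x.1) rfl
  proj_id α x := Prod.ext (A.proj_id α x.1) rfl

lemma separableSpace_metricTree (α : Omega1) :
    @TopologicalSpace.SeparableSpace (A.metricTree.X α)
      (A.metricTree.met α).toUniformSpace.toTopologicalSpace :=
  have := A.countable α
  inferInstanceAs (TopologicalSpace.SeparableSpace (ShrinkingCopies (A.Y α)))

lemma exists_isEpsBranch {ε : ℝ} (hε : 0 < ε) : ∃ x, A.metricTree.IsEpsBranch ε x := by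
  obtain ⟨n, hn⟩ := exists_nat_one_div_lt hε
  refine ⟨fun α => ((A.nonempty α).some, n), fun α β => ?_⟩
  unfold MetricOmega1Tree.rho
  exact le_trans (ShrinkingCopies.dist_le_of_snd_eq rfl) hn.le

lemma not_exists_isBranch : ¬ ∃ x, A.metricTree.IsBranch x := fun ⟨x, hx⟩ =>
  A.not_exists_thread ⟨fun α => (x α).1, fun _ _ h => congrArg Prod.fst (hx h)⟩

end AronszajnSystem

open Ordinal Order Cardinal

lemma countable_Iio_of_lt_omega_one {o : Ordinal} (h : o < ω₁) : (Set.Iio o).Countable := by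
  rw [← le_aleph0_iff_set_countable, Cardinal.mk_Iio_ordinal, lift_le_aleph0, ← lt_aleph_one_iff,
    ← lt_omega_iff_card_lt]
  exact h

lemma not_countable_omega1 : ¬ Countable Omega1 := fun h => by
  have : (Set.Iio ω₁).Countable := Set.countable_coe_iff.1 h
  rw [← le_aleph0_iff_set_countable, Cardinal.mk_Iio_ordinal, card_omega, lift_aleph] at this
  simp at this

namespace AronszajnTree

def restrict {o₁ o₂ : Ordinal} (h : o₁ ≤ o₂) (f : Set.Iio o₂ → ℚ) : Set.Iio o₁ → ℚ :=
  f ∘ Set.inclusion (Set.Iio_subset_Iio h)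

def SupLt {o : Ordinal} (f : Set.Iio o → ℚ) (q : ℚ) : Prop :=
  ∃ p < q, ∀ γ, f γ ≤ p

lemma SupLt.lt {o : Ordinal} {f : Set.Iio o → ℚ} {q : ℚ} (h : SupLt f q) (γ : Set.Iio o) :
    f γ < q :=
  let ⟨_, hpq, hp⟩ := h; (hp γ).trans_lt hpq

noncomputable def snoc {β : Ordinal} (s : Set.Iio β → ℚ) (r : ℚ) : Set.Iio (succ β) → ℚ :=
  fun γ => if h : γ.1 < β then s ⟨γ, h⟩ else r

lemma restrict_snoc {γ β : Ordinal} (h : γ ≤ β) (h' : γ ≤ succ β) (s : Set.Iio β → ℚ) (r : ℚ) :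
    restrict h' (snoc s r) = restrict h s :=
  funext fun x => dif_pos ((show x.1 < γ from x.2).trans_le h)

lemma snoc_le {β : Ordinal} {s : Set.Iio β → ℚ} {r : ℚ} (hr : ∀ γ, s γ < r) (γ) :
    snoc s r γ ≤ r := by
  unfold snoc
  split_ifs
  exacts [(hr _).le, le_rfl]

lemma snoc_strictMono {β : Ordinal} {s : Set.Iio β → ℚ} {r : ℚ} (hs : StrictMono s)
    (hr : ∀ γ, s γ < r) : StrictMono (snoc s r) := by
  intro x y hxy
  have hx : x.1 < β := lt_of_lt_of_le hxy (lt_succ_iff.1 y.2)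
  simp only [snoc, dif_pos hx]
  split_ifs
  exacts [hs hxy, hr _]

structure Node (o : Ordinal) where
  lev : Ordinal
  lev_lt : lev < o
  fn : Set.Iio lev → ℚ

instance {o : Ordinal} : Preorder (Node o) where
  le c d := ∃ h : c.lev ≤ d.lev, restrict h d.fn = c.fn
  le_refl c := ⟨le_rfl, rfl⟩
  le_trans := by
    rintro c₁ c₂ c₃ ⟨h₁, e₁⟩ ⟨h₂, e₂⟩
    exact ⟨h₁.trans h₂, by rw [← e₁, ← e₂]; rfl⟩

section Glue

variable {o : Ordinal} {c : ℕ → Node o}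

open Classical in
/-- The value `0` is junk: the chains glued below are cofinal in `o`. -/
noncomputable def glue (c : ℕ → Node o) (x : Set.Iio o) : ℚ :=
  if h : ∃ n, x.1 < (c n).lev then (c (Nat.find h)).fn ⟨x, Nat.find_spec h⟩ else 0

lemma glue_eq (hc : Monotone c) {n : ℕ} {x : Set.Iio o} (hx : x.1 < (c n).lev) :
    glue c x = (c n).fn ⟨x, hx⟩ := by
  have hex : ∃ k, x.1 < (c k).lev := ⟨n, hx⟩
  obtain ⟨_, hres⟩ := hc (Nat.find_min' hex hx)
  rw [glue, dif_pos hex]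
  exact (congrFun hres _).symm

lemma restrict_glue (hc : Monotone c) (n : ℕ) : restrict (c n).lev_lt.le (glue c) = (c n).fn :=
  funext fun x => glue_eq hc x.2

lemma glue_strictMono (hc : Monotone c) (hcof : ∀ x : Set.Iio o, ∃ n, x.1 < (c n).lev)
    (hmono : ∀ n, StrictMono (c n).fn) : StrictMono (glue c) := by
  intro x y hxy
  obtain ⟨n, hy⟩ := hcof y
  rw [glue_eq hc ((show x.1 < y.1 from hxy).trans hy), glue_eq hc hy]
  exact hmono n hxy

lemma glue_lt (hc : Monotone c) (hcof : ∀ x : Set.Iio o, ∃ n, x.1 < (c n).lev) {a : ℚ}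
    (ha : ∀ n γ, (c n).fn γ < a) (x : Set.Iio o) : glue c x < a := by
  obtain ⟨n, hx⟩ := hcof x
  rw [glue_eq hc hx]
  exact ha n _

end Glue

section Chain

variable {o : Ordinal} (T : ∀ γ < o, Set (Set.Iio γ → ℚ)) (a : ℚ)

def Node.MemBelow (c : Node o) : Prop := c.fn ∈ T c.lev c.lev_lt ∧ SupLt c.fn a

def HasBoundedExtensions : Prop :=
  ∀ γ δ (hγδ : γ ≤ δ) (hδ : δ < o), ∀ s ∈ T γ (hγδ.trans_lt hδ), SupLt s a →
    ∃ t ∈ T δ hδ, restrict hγδ t = s ∧ SupLt t a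

open Classical in
noncomputable def Node.step (c : Node o) (δ : Set.Iio o) : Node o :=
  if h : ∃ t ∈ T (max c.lev δ) (max_lt c.lev_lt δ.2),
      restrict (le_max_left _ _) t = c.fn ∧ SupLt t a
  then ⟨max c.lev δ, max_lt c.lev_lt δ.2, h.choose⟩ else c

noncomputable def chain (e : ℕ → Set.Iio o) (start : Node o) : ℕ → Node o
  | 0 => start
  | n + 1 => (chain e start n).step T a (e n)

variable {T a}

lemma Node.step_spec (hT : HasBoundedExtensions T a) {c : Node o} (hc : c.MemBelow T a)
    (δ : Set.Iio o) :
    c ≤ c.step T a δ ∧ (c.step T a δ).lev = max c.lev δ ∧ (c.step T a δ).MemBelow T a := by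
  have hex := hT _ _ (le_max_left c.lev δ) (max_lt c.lev_lt δ.2) _ hc.1 hc.2
  rw [Node.step, dif_pos hex]
  exact ⟨⟨le_max_left _ _, hex.choose_spec.2.1⟩, rfl, hex.choose_spec.1, hex.choose_spec.2.2⟩

variable (hT : HasBoundedExtensions T a) (e : ℕ → Set.Iio o) {start : Node o}
  (hstart : start.MemBelow T a)
include hT hstart

lemma chain_memBelow (n : ℕ) : (chain T a e start n).MemBelow T a := by
  induction n with
  | zero => exact hstart
  | succ n ih => exact (Node.step_spec hT ih _).2.2

lemma chain_monotone : Monotone (chain T a e start) :=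
  monotone_nat_of_le_succ fun n => (Node.step_spec hT (chain_memBelow hT e hstart n) _).1

lemma chain_cofinal (he : Function.Surjective e) (ho : IsSuccLimit o) (x : Set.Iio o) :
    ∃ n, x.1 < (chain T a e start n).lev := by
  obtain ⟨m, hm⟩ := he ⟨succ x, ho.succ_lt x.2⟩
  refine ⟨m + 1, ?_⟩
  rw [chain, (Node.step_spec hT (chain_memBelow hT e hstart m) _).2.1, hm]
  exact (lt_succ x.1).trans_le (le_max_right _ _)

end Chain

def levelZero : Set (Set.Iio (0 : Ordinal) → ℚ) := {fun _ => 0}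

def levelSucc (β : Ordinal) (S : Set (Set.Iio β → ℚ)) : Set (Set.Iio (succ β) → ℚ) :=
  {t | ∃ s ∈ S, ∃ r, (∀ γ, s γ < r) ∧ snoc s r = t}

noncomputable def enumIio (o : Ordinal) (ho : o ≠ 0) : ℕ → Set.Iio o :=
  have : Nonempty (Set.Iio o) := ⟨⟨0, pos_iff_ne_zero.2 ho⟩⟩
  Classical.epsilon Function.Surjective

lemma enumIio_surjective {o : Ordinal} (ho : o ≠ 0) (hω : o < ω₁) :
    Function.Surjective (enumIio o ho) :=
  have : Countable (Set.Iio o) := (countable_Iio_of_lt_omega_one hω).to_subtype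
  have : Nonempty (Set.Iio o) := ⟨⟨0, pos_iff_ne_zero.2 ho⟩⟩
  Classical.epsilon_spec (exists_surjective_nat _)

/-- Keeping one bound `a` along the whole chain keeps the glued sequence below `a`, hence still
extendable below any bound above `a`. -/
noncomputable def levelLimit (o : Ordinal) (ho : IsSuccLimit o)
    (T : ∀ γ < o, Set (Set.Iio γ → ℚ)) : Set (Set.Iio o → ℚ) :=
  {u | ∃ α, ∃ hα : α < o, ∃ s ∈ T α hα, ∃ a, SupLt s a ∧
    glue (chain T a (enumIio o ho.ne_bot) ⟨α, hα, s⟩) = u}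

noncomputable def level (o : Ordinal) : Set (Set.Iio o → ℚ) :=
  limitRecOn o levelZero levelSucc levelLimit

lemma level_zero : level 0 = levelZero := limitRecOn_zero ..

lemma level_succ (β : Ordinal) : level (succ β) = levelSucc β (level β) := limitRecOn_add_one ..

lemma level_of_isSuccLimit {o : Ordinal} (ho : IsSuccLimit o) :
    level o = levelLimit o ho (fun γ _ => level γ) := limitRecOn_limit _ _ _ _ ho

structure IsGoodLevel (o : Ordinal) : Prop where
  countable : (level o).Countable
  strictMono : ∀ s ∈ level o, StrictMono s
  bounded : ∀ s ∈ level o, ∃ q, SupLt s q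
  restrict_mem : ∀ γ (h : γ ≤ o), ∀ s ∈ level o, restrict h s ∈ level γ
  exists_extension : ∀ γ (h : γ ≤ o), ∀ s ∈ level γ, ∀ q, SupLt s q →
    ∃ t ∈ level o, restrict h t = s ∧ SupLt t q

lemma isGoodLevel_zero : IsGoodLevel 0 := by
  have hempty (γ : Set.Iio (0 : Ordinal)) : False := not_lt_zero (show γ.1 < 0 from γ.2)
  refine ⟨?_, fun _ _ x => (hempty x).elim, fun _ _ => ⟨1, 0, one_pos, fun x => (hempty x).elim⟩,
    ?_, ?_⟩
  · rw [level_zero]; exact Set.countable_singleton _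
  · rintro γ h s hs
    obtain rfl := nonpos_iff_eq_zero.1 h
    exact hs
  · rintro γ h s hs q hq
    obtain rfl := nonpos_iff_eq_zero.1 h
    exact ⟨s, hs, rfl, hq⟩

lemma IsGoodLevel.succ {β : Ordinal} (hβ : IsGoodLevel β) : IsGoodLevel (succ β) := by
  refine ⟨?_, ?_, ?_, ?_, ?_⟩
  · refine (hβ.countable.image2 Set.countable_univ fun s r => snoc s r).mono ?_
    rw [level_succ]
    rintro _ ⟨s, hs, r, -, rfl⟩
    exact ⟨s, hs, r, trivial, rfl⟩
  · rw [level_succ]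
    rintro _ ⟨s, hs, r, hr, rfl⟩
    exact snoc_strictMono (hβ.strictMono s hs) hr
  · rw [level_succ]
    rintro _ ⟨s, hs, r, hr, rfl⟩
    exact ⟨r + 1, r, lt_add_one r, snoc_le hr⟩
  · intro γ h t ht
    rcases h.lt_or_eq with h | rfl
    · rw [level_succ] at ht
      obtain ⟨s, hs, r, -, rfl⟩ := ht
      have hγβ := lt_succ_iff.1 h
      rw [restrict_snoc hγβ]
      exact hβ.restrict_mem γ hγβ s hs
    · exact ht
  · intro γ h s hs q hq
    rcases h.lt_or_eq with h | rfl
    · have hγβ := lt_succ_iff.1 h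
      obtain ⟨t, ht, rfl, p, hpq, htp⟩ := hβ.exists_extension γ hγβ s hs q hq
      obtain ⟨r, hpr, hrq⟩ := exists_between hpq
      have htr : ∀ γ, t γ < r := fun γ => (htp γ).trans_lt hpr
      refine ⟨snoc t r, ?_, ?_, r, hrq, snoc_le htr⟩
      · rw [level_succ]; exact ⟨t, ht, r, htr, rfl⟩
      · exact restrict_snoc hγβ _ t r
    · exact ⟨s, hs, rfl, hq⟩

section Limit

variable {o : Ordinal} (ho : IsSuccLimit o)

noncomputable abbrev levelChain (a : ℚ) (start : Node o) : ℕ → Node o :=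
  chain (fun γ _ => level γ) a (enumIio o ho.ne_bot) start

lemma mem_level_of_isSuccLimit {u : Set.Iio o → ℚ} : u ∈ level o ↔
    ∃ α, ∃ hα : α < o, ∃ s ∈ level α, ∃ a, SupLt s a ∧ glue (levelChain ho a ⟨α, hα, s⟩) = u := by
  rw [level_of_isSuccLimit ho]; rfl

variable (hω : o < ω₁) (IH : ∀ γ < o, IsGoodLevel γ) {a : ℚ} {α : Ordinal} (hα : α < o)
  {s : Set.Iio α → ℚ} (hs : s ∈ level α) (ha : SupLt s a)
include hω IH hs ha

lemma levelChain_spec :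
    Monotone (levelChain ho a ⟨α, hα, s⟩) ∧
    (∀ x : Set.Iio o, ∃ n, x.1 < (levelChain ho a ⟨α, hα, s⟩ n).lev) ∧
    ∀ n, (levelChain ho a ⟨α, hα, s⟩ n).MemBelow (fun γ _ => level γ) a := by
  have hT : HasBoundedExtensions (fun γ (_ : γ < o) => level γ) a :=
    fun γ δ h hδ s hs ha => (IH δ hδ).exists_extension γ h s hs _ ha
  exact ⟨chain_monotone hT _ ⟨hs, ha⟩,
    chain_cofinal hT _ ⟨hs, ha⟩ (enumIio_surjective ho.ne_bot hω) ho,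
    chain_memBelow hT _ ⟨hs, ha⟩⟩

lemma glue_levelChain_lt (x : Set.Iio o) : glue (levelChain ho a ⟨α, hα, s⟩) x < a :=
  have ⟨hc, hcof, hmem⟩ := levelChain_spec ho hω IH hα hs ha
  glue_lt hc hcof (fun n => (hmem n).2.lt) x

lemma glue_levelChain_strictMono : StrictMono (glue (levelChain ho a ⟨α, hα, s⟩)) :=
  have ⟨hc, hcof, hmem⟩ := levelChain_spec ho hω IH hα hs ha
  glue_strictMono hc hcof fun n => (IH _ (Node.lev_lt _)).strictMono _ (hmem n).1

end Limit

lemma isGoodLevel_of_isSuccLimit {o : Ordinal} (ho : IsSuccLimit o) (hω : o < ω₁)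
    (IH : ∀ γ < o, IsGoodLevel γ) : IsGoodLevel o := by
  refine ⟨?_, ?_, ?_, ?_, ?_⟩
  · have : Countable (Set.Iio o) := (countable_Iio_of_lt_omega_one hω).to_subtype
    have (γ : Set.Iio o) : Countable (level γ) := (IH γ γ.2).countable.to_subtype
    refine (Set.countable_range fun w : Σ γ : Set.Iio o, level γ × ℚ =>
      glue (levelChain ho w.2.2 ⟨w.1, w.1.2, w.2.1⟩)).mono ?_
    intro _ hu
    obtain ⟨α, hα, s, hs, a, -, rfl⟩ := (mem_level_of_isSuccLimit ho).1 hu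
    exact ⟨⟨⟨α, hα⟩, ⟨s, hs⟩, a⟩, rfl⟩
  · intro _ hu
    obtain ⟨α, hα, s, hs, a, ha, rfl⟩ := (mem_level_of_isSuccLimit ho).1 hu
    exact glue_levelChain_strictMono ho hω IH hα hs ha
  · intro _ hu
    obtain ⟨α, hα, s, hs, a, ha, rfl⟩ := (mem_level_of_isSuccLimit ho).1 hu
    exact ⟨a + 1, a, lt_add_one a, fun x => (glue_levelChain_lt ho hω IH hα hs ha x).le⟩
  · intro γ h u hu
    rcases h.lt_or_eq with hγ | rfl
    · obtain ⟨α, hα, s, hs, a, ha, rfl⟩ := (mem_level_of_isSuccLimit ho).1 hu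
      set c := levelChain ho a ⟨α, hα, s⟩
      obtain ⟨hc, hcof, hmem⟩ := levelChain_spec ho hω IH hα hs ha
      obtain ⟨n, hn⟩ := hcof ⟨γ, hγ⟩
      have : restrict h (glue c) = restrict hn.le (c n).fn := by rw [← restrict_glue hc n]; rfl
      rw [this]
      exact (IH _ (Node.lev_lt _)).restrict_mem γ hn.le _ (hmem n).1
    · exact hu
  · intro γ h s hs q ⟨p, hpq, hsp⟩
    rcases h.lt_or_eq with hγ | rfl
    · obtain ⟨a, hpa, haq⟩ := exists_between hpq
      have ha : SupLt s a := ⟨p, hpa, hsp⟩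
      refine ⟨glue (levelChain ho a ⟨γ, hγ, s⟩), ?_, ?_, ?_⟩
      · exact (mem_level_of_isSuccLimit ho).2 ⟨γ, hγ, s, hs, a, ha, rfl⟩
      · exact restrict_glue (levelChain_spec ho hω IH hγ hs ha).1 0
      · exact ⟨a, haq, fun x => (glue_levelChain_lt ho hω IH hγ hs ha x).le⟩
    · exact ⟨s, hs, rfl, p, hpq, hsp⟩

theorem isGoodLevel {o : Ordinal} : o < ω₁ → IsGoodLevel o :=
  limitRecOn (motive := fun o => o < ω₁ → IsGoodLevel o) o (fun _ => isGoodLevel_zero)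
    (fun β IH hω => (IH ((lt_succ β).trans hω)).succ)
    (fun _ ho IH hω => isGoodLevel_of_isSuccLimit ho hω fun γ hγ => IH γ hγ (hγ.trans hω))

lemma level_nonempty {o : Ordinal} (h : o < ω₁) : (level o).Nonempty :=
  have h₀ : (fun _ => 0) ∈ level 0 := by rw [level_zero]; rfl
  have ⟨t, ht, _⟩ := (isGoodLevel h).exists_extension 0 zero_le _ h₀ 1
    ⟨0, one_pos, fun x => (not_lt_zero (show x.1 < 0 from x.2)).elim⟩
  ⟨t, ht⟩

lemma exists_restrict_eq {γ o : Ordinal} (hω : o < ω₁) (h : γ ≤ o) {s : Set.Iio γ → ℚ}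
    (hs : s ∈ level γ) : ∃ t ∈ level o, restrict h t = s :=
  have ⟨q, hq⟩ := (isGoodLevel (h.trans_lt hω)).bounded s hs
  have ⟨t, ht, hts, _⟩ := (isGoodLevel hω).exists_extension γ h s hs q hq
  ⟨t, ht, hts⟩

lemma not_exists_coherent :
    ¬ ∃ t : ∀ α : Omega1, level α.1, ∀ ⦃α β : Omega1⦄ (h : α ≤ β), restrict h (t β).1 = (t α).1 := by
  rintro ⟨t, ht⟩
  let next (α : Omega1) : Omega1 := ⟨succ α.1, (Cardinal.isSuccLimit_omega 1).succ_lt α.2⟩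
  let F (α : Omega1) : ℚ := (t (next α)).1 ⟨α.1, lt_succ α.1⟩
  have hF : StrictMono F := by
    intro α β hαβ
    have hle : next α ≤ next β := succ_le_succ (show α.1 ≤ β.1 from hαβ.le)
    change (t (next α)).1 _ < _
    rw [← ht hle]
    exact (isGoodLevel (next β).2).strictMono _ (t _).2 (show α.1 < β.1 from hαβ)
  exact not_countable_omega1 hF.injective.countable

instance (α : Omega1) : Countable (level α.1) := (isGoodLevel α.2).countable.to_subtype

def restrictLevel {α β : Omega1} (h : α ≤ β) (t : level β.1) : level α.1 :=
  ⟨restrict h t.1, (isGoodLevel β.2).restrict_mem _ h _ t.2⟩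

lemma restrictLevel_surjective {α β : Omega1} (h : α ≤ β) :
    Function.Surjective (restrictLevel h) := fun s =>
  have ⟨t, ht, hts⟩ := exists_restrict_eq β.2 h s.2
  ⟨⟨t, ht⟩, Subtype.ext hts⟩

/-- `Shrink` brings the countable levels, sets of functions on ordinals, down to `Type`. -/
noncomputable def system : AronszajnSystem where
  Y α := Shrink (level α.1)
  countable _ := (equivShrink _).symm.injective.countable
  nonempty α := (level_nonempty α.2).to_subtype.map (equivShrink _)
  proj h := equivShrink _ ∘ restrictLevel h ∘ (equivShrink _).symm
  proj_surj h := (equivShrink _).surjective.comp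
    ((restrictLevel_surjective h).comp (equivShrink _).symm.surjective)
  proj_comm _ _ _ := by simp only [Function.comp_apply, Equiv.symm_apply_apply]; rfl
  proj_id _ _ := by simp only [Function.comp_apply]; exact (equivShrink _).apply_symm_apply _
  not_exists_thread := fun ⟨y, hy⟩ => not_exists_coherent
    ⟨fun α => (equivShrink _).symm (y α), fun α β h => by
      dsimp only; rw [← hy h]; simp [restrictLevel]⟩

end AronszajnTree

/-- there is a Polish Aronszajn tree (a metric ω₁-tree with separable levels and
no cofinal branch) which has an ε-branch for every ε > 0. -/
theorem exists_polish_aronszajn_tree_with_epsBranches :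
    ∃ T : MetricOmega1Tree,
      (∀ α : Omega1, @TopologicalSpace.SeparableSpace (T.X α)
        (T.met α).toUniformSpace.toTopologicalSpace) ∧
      (∀ ε : ℝ, 0 < ε → ∃ x : ∀ α, T.X α, T.IsEpsBranch ε x) ∧
      ¬ ∃ x : ∀ α, T.X α, T.IsBranch x :=
  let A := AronszajnTree.system
  ⟨A.metricTree, A.separableSpace_metricTree, fun _ => A.exists_isEpsBranch,
    A.not_exists_isBranch⟩
end

section
/- Let H be an infinite-dimensional Hilbert space and let v, w ∈ B(H) be operators whose images in the Calkin algebra C(H) = B(H)/K(H) are unitary. If (Ad v)(a) − (Ad w)(a) is compact for every a ∈ B(H), then there exists a complex number z of modulus 1 such that v − z·w is compact. -/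
/-!
Modulo compact operators, `u = w* v` commutes with every operator `a`:
`u a = w* v a v* v ≡ w* w a w* v ≡ a u`. Since the Calkin algebra has trivial centre, `u ≡ z`
for a scalar `z`, hence `v ≡ w w* v ≡ z w`, and comparing `‖v eₙ‖ → 1` with `‖w eₙ‖ → 1`
along an orthonormal sequence gives `|z| = 1`.

For the centre: `z` is a limit point of the diagonal entries `⟪eₙ, u eₙ⟫` along one orthonormal
sequence, and since the partial isometry `eₙ ↦ fₙ` commutes with `u` modulo compacts, the diagonal
entries along every orthonormal sequence `fₙ` tend to `z`. If `T = u - z` were not compact, a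
greedy choice gives an orthonormal sequence `fₙ` with `‖T fₙ‖ ≥ ε` on which all off-diagonal
entries of `T` vanish, and the projection `Q` onto the span of the `fₙ` yields a contradiction.
-/

open ContinuousLinearMap Filter Topology
open scoped InnerProductSpace

section Calkin

variable (𝕜 E : Type*) [NontriviallyNormedField 𝕜] [NormedAddCommGroup E] [NormedSpace 𝕜 E]

def compactOperators : TwoSidedIdeal (E →L[𝕜] E) :=
  .mk' {T | IsCompactOperator T} isCompactOperator_zero (fun hS hT => hS.add hT)
    (fun hT => hT.neg) (fun {S T} hT => show IsCompactOperator ⇑(S * T) from hT.clm_comp S)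
    (fun {T S} hT => show IsCompactOperator ⇑(T * S) from hT.comp_clm S)

abbrev CalkinAlgebra := (compactOperators 𝕜 E).ringCon.Quotient

variable {𝕜 E}

namespace CalkinAlgebra

theorem coe_surjective : Function.Surjective ((↑) : (E →L[𝕜] E) → CalkinAlgebra 𝕜 E) :=
  Quotient.mk''_surjective

theorem coe_eq_coe_iff {S T : E →L[𝕜] E} :
    (S : CalkinAlgebra 𝕜 E) = T ↔ IsCompactOperator (S - T) := by
  rw [RingCon.eq, TwoSidedIdeal.rel_iff, compactOperators, TwoSidedIdeal.mem_mk']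
  exact Iff.rfl

theorem coe_comp (S T : E →L[𝕜] E) : ((S ∘L T : E →L[𝕜] E) : CalkinAlgebra 𝕜 E) = S * T :=
  rfl

theorem coe_mul_eq_one {S T : E →L[𝕜] E} (h : IsCompactOperator ⇑(S ∘L T - 1)) :
    (S : CalkinAlgebra 𝕜 E) * T = 1 := by
  rw [← coe_comp, ← RingCon.coe_one, coe_eq_coe_iff]
  exact h

end CalkinAlgebra

end Calkin

theorem mul_comm_of_conj_eq {M : Type*} [Monoid M] {v v' w w' : M} (hv : v' * v = 1)
    (hw : w' * w = 1) (h : ∀ a, v * a * v' = w * a * w') (a : M) :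
    a * (w' * v) = w' * v * a :=
  calc a * (w' * v) = w' * (w * a * w') * v := by simp only [← mul_assoc, hw, one_mul]
    _ = w' * (v * a * v') * v := by rw [h]
    _ = w' * v * a := by simp only [mul_assoc, hv, mul_one]

section Hilbert

variable {𝕜 E F : Type*} [RCLike 𝕜] [NormedAddCommGroup E] [InnerProductSpace 𝕜 E]
  [NormedAddCommGroup F] [InnerProductSpace 𝕜 F]

theorem Orthonormal.tendsto_inner_cofinite_zero {ι : Type*} {f : ι → E} (hf : Orthonormal 𝕜 f)
    (y : E) :
    Tendsto (fun i => ⟪y, f i⟫_𝕜) cofinite (𝓝 0) := by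
  have := (hf.inner_products_summable (x := y)).tendsto_cofinite_zero
  rw [tendsto_zero_iff_norm_tendsto_zero]
  simpa [norm_inner_symm] using this.sqrt

variable [CompleteSpace F]

theorem isCompactOperator_of_forall_norm_apply_orthogonal_le {T : E →L[𝕜] F}
    (h : ∀ ε > 0, ∃ K : Submodule 𝕜 E, FiniteDimensional 𝕜 K ∧
      ∀ x ∈ Kᗮ, ‖x‖ = 1 → ‖T x‖ ≤ ε) :
    IsCompactOperator T := by
  refine isClosed_setOfPred_isCompactOperator.closure_subset
    (Metric.mem_closure_iff.2 fun ε hε => ?_)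
  obtain ⟨K, _, hTK⟩ := h (ε / 2) (half_pos hε)
  refine ⟨T ∘L K.starProjection, ?_, ?_⟩
  · exact (isCompactOperator_of_locallyCompactSpace_dom K.orthogonalProjectionOnto).clm_comp
      (T ∘L K.subtypeL)
  have hTKperp : ‖T ∘L Kᗮ.subtypeL‖ ≤ ε / 2 :=
    opNorm_le_of_unit_norm (half_pos hε).le fun x hx => hTK x x.2 hx
  calc dist T (T ∘L K.starProjection) = ‖T ∘L Kᗮ.starProjection‖ := by
        rw [dist_eq_norm, K.starProjection_orthogonal, comp_sub, comp_id]
    _ = ‖(T ∘L Kᗮ.subtypeL) ∘L Kᗮ.orthogonalProjectionOnto‖ := rfl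
    _ ≤ ‖T ∘L Kᗮ.subtypeL‖ * ‖Kᗮ.orthogonalProjectionOnto‖ := opNorm_comp_le _ _
    _ ≤ ε / 2 * 1 := by
        gcongr
        exact Kᗮ.orthogonalProjectionOnto_norm_le
    _ < ε := by linarith

variable [CompleteSpace E]

theorem IsCompactOperator.tendsto_apply_orthonormal {T : E →L[𝕜] F} (hT : IsCompactOperator T)
    {f : ℕ → E} (hf : Orthonormal 𝕜 f) : Tendsto (fun n => T (f n)) atTop (𝓝 0) := by
  refine tendsto_of_subseq_tendsto fun ns hns => ?_
  obtain ⟨K, hK, hTK⟩ := hT.image_closedBall_subset_compact 1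
  have hmem : ∀ n, T (f (ns n)) ∈ K := fun n => hTK ⟨f (ns n), by simp [hf.1], rfl⟩
  obtain ⟨g, -, ms, hms, hlim⟩ := hK.tendsto_subseq hmem
  suffices g = 0 from ⟨ms, this ▸ hlim⟩
  have hweak : Tendsto (fun n => ⟪g, T (f (ns (ms n)))⟫_𝕜) atTop (𝓝 0) := by
    simp only [← adjoint_inner_left]
    exact ((hf.tendsto_inner_cofinite_zero _).comp Nat.cofinite_eq_atTop.ge).comp
      (hns.comp hms.tendsto_atTop)
  exact inner_self_eq_zero.mp (tendsto_nhds_unique (tendsto_const_nhds.inner hlim) hweak)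

theorem IsCompactOperator.tendsto_inner_apply_orthonormal {T : E →L[𝕜] F}
    (hT : IsCompactOperator T) {e : ℕ → E} (he : Orthonormal 𝕜 e) {f : ℕ → F}
    (hf : ∀ n, ‖f n‖ ≤ 1) : Tendsto (fun n => ⟪f n, T (e n)⟫_𝕜) atTop (𝓝 0) := by
  refine squeeze_zero_norm (fun n => ?_)
    (tendsto_zero_iff_norm_tendsto_zero.1 (hT.tendsto_apply_orthonormal he))
  calc ‖⟪f n, T (e n)⟫_𝕜‖ ≤ ‖f n‖ * ‖T (e n)‖ := norm_inner_le_norm _ _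
    _ ≤ ‖T (e n)‖ := mul_le_of_le_one_left (norm_nonneg _) (hf n)

theorem exists_orthonormal_seq_of_not_isCompactOperator {T : E →L[𝕜] E}
    (hT : ¬ IsCompactOperator T) :
    ∃ ε > 0, ∃ f : ℕ → E, Orthonormal 𝕜 f ∧ (∀ n, ε ≤ ‖T (f n)‖) ∧
      Pairwise fun m n => ⟪f m, T (f n)⟫_𝕜 = 0 := by
  classical
  obtain ⟨ε, hε, hK⟩ : ∃ ε > 0, ∀ K : Submodule 𝕜 E, FiniteDimensional 𝕜 K →
      ∃ x ∈ Kᗮ, ‖x‖ = 1 ∧ ε < ‖T x‖ := by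
    simpa using mt isCompactOperator_of_forall_norm_apply_orthogonal_le hT
  let r : E → E → Prop := fun x y => ⟪x, y⟫_𝕜 = 0 ∧ ⟪x, T y⟫_𝕜 = 0 ∧ ⟪T x, y⟫_𝕜 = 0
  have : Std.Symm r := ⟨fun x y ⟨h₁, h₂, h₃⟩ =>
    ⟨inner_eq_zero_symm.1 h₁, inner_eq_zero_symm.1 h₃, inner_eq_zero_symm.1 h₂⟩⟩
  obtain ⟨f, hfP, hfr⟩ := exists_seq_of_forall_finset_exists'
    (fun x => ‖x‖ = 1 ∧ ε ≤ ‖T x‖) r fun s _ => by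
      obtain ⟨y, hy, hy₁, hεy⟩ := hK (Submodule.span 𝕜 ↑(s ∪ s.image T ∪ s.image (adjoint T)))
        (FiniteDimensional.span_finset 𝕜 _)
      have hperp : ∀ z ∈ s ∪ s.image T ∪ s.image (adjoint T), ⟪z, y⟫_𝕜 = 0 := fun z hz =>
        Submodule.inner_right_of_mem_orthogonal (Submodule.subset_span hz) hy
      refine ⟨y, ⟨hy₁, hεy.le⟩, fun x hx => ⟨?_, ?_, ?_⟩⟩
      · exact hperp x (Finset.mem_union_left _ (Finset.mem_union_left _ hx))
      · rw [← adjoint_inner_left]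
        exact hperp _ (Finset.mem_union_right _ (Finset.mem_image_of_mem _ hx))
      · exact hperp _
          (Finset.mem_union_left _ (Finset.mem_union_right _ (Finset.mem_image_of_mem _ hx)))
  exact ⟨ε, hε, f, ⟨fun n => (hfP n).1, fun m n hmn => (hfr hmn).1⟩, fun n => (hfP n).2,
    fun m n hmn => (hfr hmn).2.1⟩

theorem exists_orthonormal_seq (hE : ¬ FiniteDimensional 𝕜 E) :
    ∃ e : ℕ → E, Orthonormal 𝕜 e := by
  have hid : ¬ IsCompactOperator (ContinuousLinearMap.id 𝕜 E) := fun h =>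
    hE (FiniteDimensional.of_isCompactOperator_id h)
  obtain ⟨-, -, e, he, -⟩ := exists_orthonormal_seq_of_not_isCompactOperator hid
  exact ⟨e, he⟩

section PartialIsometry

variable {ι : Type*} {e f : ι → E} (he : Orthonormal 𝕜 e) (hf : Orthonormal 𝕜 f)

theorem Orthonormal.adjoint_linearIsometry_apply (x : E) (i : ι) :
    adjoint he.orthogonalFamily.linearIsometry.toContinuousLinearMap x i = ⟪e i, x⟫_𝕜 := by
  classical
  simpa [lp.inner_single_left] using
    adjoint_inner_right he.orthogonalFamily.linearIsometry.toContinuousLinearMap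
      (lp.single 2 i 1) x

noncomputable def partialIsometryOfOrthonormal : E →L[𝕜] E :=
  hf.orthogonalFamily.linearIsometry.toContinuousLinearMap ∘L
    adjoint he.orthogonalFamily.linearIsometry.toContinuousLinearMap

theorem hasSum_partialIsometryOfOrthonormal_apply (x : E) :
    HasSum (fun i => ⟪e i, x⟫_𝕜 • f i) (partialIsometryOfOrthonormal he hf x) := by
  simpa [partialIsometryOfOrthonormal, he.adjoint_linearIsometry_apply] using
    hf.orthogonalFamily.hasSum_linearIsometry
      (adjoint he.orthogonalFamily.linearIsometry.toContinuousLinearMap x)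

theorem partialIsometryOfOrthonormal_apply_of_inner_eq_zero {x : E} {i : ι}
    (hx : ∀ j ≠ i, ⟪e j, x⟫_𝕜 = 0) :
    partialIsometryOfOrthonormal he hf x = ⟪e i, x⟫_𝕜 • f i :=
  (hasSum_partialIsometryOfOrthonormal_apply he hf x).unique
    (hasSum_single i fun j hj => by rw [hx j hj, zero_smul])

theorem partialIsometryOfOrthonormal_apply_self (i : ι) :
    partialIsometryOfOrthonormal he hf (e i) = f i := by
  rw [partialIsometryOfOrthonormal_apply_of_inner_eq_zero he hf fun j hj => he.2 hj,
    inner_self_eq_norm_sq_to_K, he.1 i]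
  simp

theorem inner_partialIsometryOfOrthonormal_apply (x : E) (i : ι) :
    ⟪f i, partialIsometryOfOrthonormal he hf x⟫_𝕜 = ⟪e i, x⟫_𝕜 := by
  have := ((hasSum_partialIsometryOfOrthonormal_apply he hf x).mapL (innerSL 𝕜 (f i))).unique
    (hasSum_single i fun j hj => by simp [hf.2 hj.symm])
  simpa [inner_smul_right, inner_self_eq_norm_sq_to_K, hf.1 i] using this

end PartialIsometry

section Center

variable {u T : E →L[𝕜] E}

theorem tendsto_inner_apply_sub_inner_apply_of_commute
    (hu : ∀ a : E →L[𝕜] E, IsCompactOperator ⇑(u * a - a * u)) {e f : ℕ → E}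
    (he : Orthonormal 𝕜 e) (hf : Orthonormal 𝕜 f) :
    Tendsto (fun n => ⟪f n, u (f n)⟫_𝕜 - ⟪e n, u (e n)⟫_𝕜) atTop (𝓝 0) := by
  set S := partialIsometryOfOrthonormal he hf
  refine ((hu S).tendsto_inner_apply_orthonormal he fun n => (hf.1 n).le).congr fun n => ?_
  simp [S, inner_sub_right, mul_def, partialIsometryOfOrthonormal_apply_self,
    inner_partialIsometryOfOrthonormal_apply]

theorem exists_tendsto_inner_apply_of_commute (hE : ¬ FiniteDimensional 𝕜 E)
    (hu : ∀ a : E →L[𝕜] E, IsCompactOperator ⇑(u * a - a * u)) :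
    ∃ c : 𝕜, ∀ f : ℕ → E, Orthonormal 𝕜 f → Tendsto (fun n => ⟪f n, u (f n)⟫_𝕜) atTop (𝓝 c) := by
  obtain ⟨e, he⟩ := exists_orthonormal_seq hE
  have hbound : ∀ n, ⟪e n, u (e n)⟫_𝕜 ∈ Metric.closedBall 0 ‖u‖ := fun n => by
    simpa [he.1 n] using (norm_inner_le_norm (e n) (u (e n))).trans
      (mul_le_mul_of_nonneg_left (u.le_opNorm (e n)) (norm_nonneg _))
  obtain ⟨c, -, φ, hφ, hc⟩ := (isCompact_closedBall 0 ‖u‖).tendsto_subseq hbound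
  refine ⟨c, fun f hf => ?_⟩
  simpa using (tendsto_inner_apply_sub_inner_apply_of_commute hu (he.comp φ hφ.injective) hf).add hc

theorem isCompactOperator_of_commute_of_tendsto_inner_apply
    (hT : ∀ a : E →L[𝕜] E, IsCompactOperator ⇑(T * a - a * T))
    (h0 : ∀ f : ℕ → E, Orthonormal 𝕜 f → Tendsto (fun n => ⟪f n, T (f n)⟫_𝕜) atTop (𝓝 0)) :
    IsCompactOperator T := by
  by_contra hTc
  obtain ⟨ε, hε, f, hf, hlarge, hoff⟩ := exists_orthonormal_seq_of_not_isCompactOperator hTc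
  set Q := partialIsometryOfOrthonormal hf hf
  have hQT : ∀ n, Q (T (f n)) = ⟪f n, T (f n)⟫_𝕜 • f n := fun n =>
    partialIsometryOfOrthonormal_apply_of_inner_eq_zero hf hf fun m hm => hoff hm
  have hdiag : Tendsto (fun n => ⟪f n, T (f n)⟫_𝕜 • f n) atTop (𝓝 0) := by
    rw [tendsto_zero_iff_norm_tendsto_zero]
    simpa [norm_smul, hf.1] using (h0 f hf).norm
  -- `T (f n) = [T, Q] (f n) + ⟪f n, T (f n)⟫ • f n`, and both summands tend to zero
  have hTf : Tendsto (fun n => T (f n)) atTop (𝓝 0) := by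
    simpa [mul_def, Q, partialIsometryOfOrthonormal_apply_self, hQT] using
      ((hT Q).tendsto_apply_orthonormal hf).add hdiag
  obtain ⟨n, hn⟩ := (hTf.norm.eventually (gt_mem_nhds (by simpa using hε))).exists
  exact (hlarge n).not_gt hn

theorem exists_isCompactOperator_sub_smul_one_of_commute (hE : ¬ FiniteDimensional 𝕜 E)
    (hu : ∀ a : E →L[𝕜] E, IsCompactOperator ⇑(u * a - a * u)) :
    ∃ c : 𝕜, IsCompactOperator ⇑(u - c • 1) := by
  obtain ⟨c, hc⟩ := exists_tendsto_inner_apply_of_commute hE hu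
  refine ⟨c, isCompactOperator_of_commute_of_tendsto_inner_apply (fun a => ?_) fun f hf => ?_⟩
  · simpa [sub_mul, mul_sub] using hu a
  · simpa [inner_sub_right, inner_smul_right, inner_self_eq_norm_sq_to_K, hf.1] using
      (hc f hf).sub_const c

end Center

theorem IsCompactOperator.tendsto_norm_apply_orthonormal_of_adjoint_comp_self_sub_one
    {a : E →L[𝕜] F} (ha : IsCompactOperator ⇑(adjoint a ∘L a - 1)) {e : ℕ → E}
    (he : Orthonormal 𝕜 e) : Tendsto (fun n => ‖a (e n)‖) atTop (𝓝 1) := by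
  have h := ha.tendsto_inner_apply_orthonormal he fun n => (he.1 n).le
  have hsq : Tendsto (fun n => ‖a (e n)‖ ^ 2) atTop (𝓝 1) := by
    have hre := (RCLike.continuous_re.tendsto _).comp h
    simpa [inner_sub_right, adjoint_inner_right, inner_self_eq_norm_sq_to_K, he.1] using
      hre.add_const 1
  simpa using hsq.sqrt

theorem norm_eq_one_of_isCompactOperator_sub_smul (hE : ¬ FiniteDimensional 𝕜 E)
    {v w : E →L[𝕜] F} (hv : IsCompactOperator ⇑(adjoint v ∘L v - 1))
    (hw : IsCompactOperator ⇑(adjoint w ∘L w - 1)) {z : 𝕜}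
    (hvw : IsCompactOperator ⇑(v - z • w)) : ‖z‖ = 1 := by
  obtain ⟨e, he⟩ := exists_orthonormal_seq hE
  have hdiff : Tendsto (fun n => ‖v (e n)‖ - ‖z • w (e n)‖) atTop (𝓝 0) :=
    squeeze_zero_norm (fun n => abs_norm_sub_norm_le _ _)
      (tendsto_zero_iff_norm_tendsto_zero.1 (hvw.tendsto_apply_orthonormal he))
  have hlim := (hv.tendsto_norm_apply_orthonormal_of_adjoint_comp_self_sub_one he).sub
    ((hw.tendsto_norm_apply_orthonormal_of_adjoint_comp_self_sub_one he).const_mul ‖z‖)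
  simp only [← norm_smul, mul_one] at hlim
  linarith [tendsto_nhds_unique hlim hdiff]

theorem CalkinAlgebra.center_eq_bot (hE : ¬ FiniteDimensional 𝕜 E) :
    Subalgebra.center 𝕜 (CalkinAlgebra 𝕜 E) = ⊥ := by
  refine eq_bot_iff.2 fun U hU => ?_
  obtain ⟨u, rfl⟩ := CalkinAlgebra.coe_surjective U
  obtain ⟨c, hc⟩ := exists_isCompactOperator_sub_smul_one_of_commute (u := u) hE fun a => by
    rw [← CalkinAlgebra.coe_eq_coe_iff, RingCon.coe_mul, RingCon.coe_mul]
    exact (Subalgebra.mem_center_iff.1 hU _).symm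
  refine Algebra.mem_bot.2 ⟨c, ?_⟩
  rw [← RingCon.coe_algebraMap, Algebra.algebraMap_eq_smul_one, CalkinAlgebra.coe_eq_coe_iff]
  simpa using hc.neg

end Hilbert

theorem exists_unimodular_of_ad_eq_mod_compact_general
    {H : Type*} [NormedAddCommGroup H] [InnerProductSpace ℂ H] [CompleteSpace H]
    (hinf : ¬ FiniteDimensional ℂ H)
    (v w : H →L[ℂ] H)
    (hv₂ : IsCompactOperator ⇑(adjoint v ∘L v - 1))
    (hw₁ : IsCompactOperator ⇑(w ∘L adjoint w - 1))
    (hw₂ : IsCompactOperator ⇑(adjoint w ∘L w - 1))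
    (h : ∀ a : H →L[ℂ] H,
      IsCompactOperator ⇑(v ∘L a ∘L adjoint v - w ∘L a ∘L adjoint w)) :
    ∃ z : ℂ, ‖z‖ = 1 ∧ IsCompactOperator ⇑(v - z • w) := by
  have hcentral : ((adjoint w ∘L v : H →L[ℂ] H) : CalkinAlgebra ℂ H) ∈
      Subalgebra.center ℂ (CalkinAlgebra ℂ H) := by
    refine Subalgebra.mem_center_iff.2 fun A => ?_
    refine mul_comm_of_conj_eq (CalkinAlgebra.coe_mul_eq_one hv₂)
      (CalkinAlgebra.coe_mul_eq_one hw₂) (fun B => ?_) A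
    obtain ⟨b, rfl⟩ := CalkinAlgebra.coe_surjective B
    exact CalkinAlgebra.coe_eq_coe_iff.2 (h b)
  obtain ⟨z, hz⟩ := Algebra.mem_bot.1 (CalkinAlgebra.center_eq_bot hinf ▸ hcentral)
  have hvw : IsCompactOperator ⇑(v - z • w) := by
    rw [← CalkinAlgebra.coe_eq_coe_iff]
    calc (v : CalkinAlgebra ℂ H) = w * adjoint w * v := by
          rw [CalkinAlgebra.coe_mul_eq_one hw₁, one_mul]
      _ = w * algebraMap ℂ _ z := by rw [hz, mul_assoc, CalkinAlgebra.coe_comp]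
      _ = ↑(z • w) := by rw [← Algebra.commutes, ← Algebra.smul_def, RingCon.coe_smul]
  exact ⟨z, norm_eq_one_of_isCompactOperator_sub_smul hinf hv₂ hw₂ hvw, hvw⟩

/-- if `v` and `w` are bounded operators on an infinite-dimensional Hilbert space
whose images in the Calkin algebra are unitary, and `Ad v` and `Ad w` agree modulo compact
operators, then `v - z • w` is compact for some unimodular scalar `z`. -/
theorem exists_unimodular_of_ad_eq_mod_compact
    {H : Type*} [NormedAddCommGroup H] [InnerProductSpace ℂ H] [CompleteSpace H]
    (hinf : ¬ FiniteDimensional ℂ H)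
    (v w : H →L[ℂ] H)
    (hv₁ : IsCompactOperator ⇑(v ∘L adjoint v - 1))
    (hv₂ : IsCompactOperator ⇑(adjoint v ∘L v - 1))
    (hw₁ : IsCompactOperator ⇑(w ∘L adjoint w - 1))
    (hw₂ : IsCompactOperator ⇑(adjoint w ∘L w - 1))
    (h : ∀ a : H →L[ℂ] H,
      IsCompactOperator ⇑(v ∘L a ∘L adjoint v - w ∘L a ∘L adjoint w)) :
    ∃ z : ℂ, ‖z‖ = 1 ∧ IsCompactOperator ⇑(v - z • w) :=
  exists_unimodular_of_ad_eq_mod_compact_general hinf v w hv₂ hw₁ hw₂ h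
end

section
/- Let T be a metric ω₁-tree and suppose B_n ⊆ T, for n ∈ ℕ, are such that each B_n is a (1/n)-branch and B_{n+1} is contained in the downward closure S(B_n) of B_n. Then for every α < ω₁ the sets S(B_n) ∩ X_α form a decreasing sequence of nonempty closed subsets of X_α with diameters tending to 0, and the unique points x_α ∈ ⋂_n (S(B_n) ∩ X_α) form a branch of T. -/
open Ordinal

/-- The downward closure of the set of points of a level-selection `b`: at level `α` it is the
metric closure of the set of projections of the points of `b` lying on levels ≥ α. -/
def MetricOmega1Tree.downClosure (T : MetricOmega1Tree) (b : ∀ α, T.X α) (α : Omega1) :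
    Set (T.X α) :=
  @closure _ (T.met α).toUniformSpace.toTopologicalSpace
    {y : T.X α | ∃ (β : Omega1) (h : α ≤ β), y = T.proj h (b β)}


namespace MetricOmega1Tree

variable (T : MetricOmega1Tree)

noncomputable instance instMet (α : Omega1) : MetricSpace (T.X α) := T.met α
instance instComplete (α : Omega1) : CompleteSpace (T.X α) := T.complete α

/-- The generating set of the downward closure. -/
def gen (b : ∀ α, T.X α) (α : Omega1) : Set (T.X α) :=
  {y : T.X α | ∃ (β : Omega1) (h : α ≤ β), y = T.proj h (b β)}

lemma downClosure_eq (b : ∀ α, T.X α) (α : Omega1) :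
    T.downClosure b α = closure (T.gen b α) := rfl

lemma proj_lipschitz {α β : Omega1} (h : α ≤ β) : LipschitzWith 1 (T.proj h) :=
  LipschitzWith.of_dist_le_mul fun x y => by
    simp only [NNReal.coe_one, one_mul]; exact T.proj_contr h x y

lemma mem_gen_self (b : ∀ α, T.X α) (α : Omega1) : b α ∈ T.gen b α :=
  ⟨α, le_refl α, (T.proj_id α (b α)).symm⟩

lemma mem_downClosure_self (b : ∀ α, T.X α) (α : Omega1) : b α ∈ T.downClosure b α :=
  subset_closure (T.mem_gen_self b α)

lemma gen_mapsTo (b : ∀ α, T.X α) {α β : Omega1} (h : α ≤ β) :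
    Set.MapsTo (T.proj h) (T.gen b β) (T.gen b α) := by
  rintro y ⟨γ, hγ, rfl⟩
  exact ⟨γ, h.trans hγ, T.proj_comm h hγ (b γ)⟩

lemma gen_dist_le {n : ℕ} (hn : 1 ≤ n) (b : ℕ → ∀ α, T.X α)
    (hbr : T.IsEpsBranch (1 / n) (b n)) (α : Omega1) :
    ∀ y ∈ T.gen (b n) α, ∀ z ∈ T.gen (b n) α, dist y z ≤ 1 / n := by
  rintro y ⟨β₁, h₁, rfl⟩ z ⟨β₂, h₂, rfl⟩
  have hαγ : α ≤ min β₁ β₂ := le_min h₁ h₂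
  have e₁ : T.proj h₁ (b n β₁) = T.proj hαγ (T.proj (min_le_left β₁ β₂) (b n β₁)) := by
    rw [T.proj_comm hαγ (min_le_left β₁ β₂) (b n β₁)]
  have e₂ : T.proj h₂ (b n β₂) = T.proj hαγ (T.proj (min_le_right β₁ β₂) (b n β₂)) := by
    rw [T.proj_comm hαγ (min_le_right β₁ β₂) (b n β₂)]
  rw [e₁, e₂]
  calc dist (T.proj hαγ (T.proj (min_le_left β₁ β₂) (b n β₁)))
        (T.proj hαγ (T.proj (min_le_right β₁ β₂) (b n β₂)))
      ≤ dist (T.proj (min_le_left β₁ β₂) (b n β₁)) (T.proj (min_le_right β₁ β₂) (b n β₂)) :=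
        T.proj_contr hαγ _ _
    _ ≤ 1 / n := hbr β₁ β₂

lemma downClosure_diam_le {n : ℕ} (hn : 1 ≤ n) (b : ℕ → ∀ α, T.X α)
    (hbr : T.IsEpsBranch (1 / n) (b n)) (α : Omega1) :
    Metric.diam (T.downClosure (b n) α) ≤ 1 / n := by
  rw [downClosure_eq, Metric.diam_closure]
  exact Metric.diam_le_of_forall_dist_le (by positivity)
    fun y hy z hz => T.gen_dist_le hn b hbr α y hy z hz


end MetricOmega1Tree

/-- given (1/n)-branches `b n` with `b (n+1)` inside the downward closure of
`b n`, the downward closures form decreasing sequences of nonempty closed sets of vanishing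
diameter on each level, and the unique points in their intersections form a branch. -/
theorem branch_of_nested_epsBranches (T : MetricOmega1Tree)
    (b : ℕ → ∀ α, T.X α)
    (hbr : ∀ n : ℕ, 1 ≤ n → T.IsEpsBranch (1 / n) (b n))
    (hsub : ∀ (n : ℕ) (α : Omega1), b (n + 1) α ∈ T.downClosure (b n) α) :
    (∀ (n : ℕ) (α : Omega1),
        (T.downClosure (b n) α).Nonempty ∧
        @IsClosed _ (T.met α).toUniformSpace.toTopologicalSpace (T.downClosure (b n) α) ∧
        T.downClosure (b (n + 1)) α ⊆ T.downClosure (b n) α) ∧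
    (∀ n : ℕ, 1 ≤ n → ∀ α : Omega1,
        @Metric.diam _ (T.met α).toPseudoMetricSpace (T.downClosure (b n) α) ≤ 1 / n) ∧
    (∃ x : ∀ α, T.X α, T.IsBranch x ∧
        ∀ α : Omega1, (⋂ n : ℕ, T.downClosure (b n) α) = {x α}) := by
  classical
  have hclosed : ∀ (n : ℕ) (α : Omega1), IsClosed (T.downClosure (b n) α) := by
    intro n α; rw [T.downClosure_eq]; exact isClosed_closure
  have hdec : ∀ (n : ℕ) (α : Omega1),
      T.downClosure (b (n + 1)) α ⊆ T.downClosure (b n) α := by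
    intro n α
    rw [T.downClosure_eq (b (n + 1)) α]
    refine closure_minimal ?_ (hclosed n α)
    rintro y ⟨β, h, rfl⟩
    exact map_mem_closure (T.proj_lipschitz h).continuous (hsub n β) (T.gen_mapsTo (b n) h)
  have hanti : ∀ (α : Omega1) {n m : ℕ}, n ≤ m →
      T.downClosure (b m) α ⊆ T.downClosure (b n) α := by
    intro α n m h
    refine Nat.le_induction subset_rfl (fun m hm ih => ?_) m h
    exact (hdec m α).trans ih
  have hmemC : ∀ (α : Omega1) (n m : ℕ), n ≤ m → b m α ∈ T.downClosure (b n) α :=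
    fun α n m h => hanti α h (T.mem_downClosure_self (b m) α)
  have hbound : ∀ (n : ℕ), 1 ≤ n → ∀ (α : Omega1),
      Bornology.IsBounded (T.downClosure (b n) α) := by
    intro n hn α
    rw [T.downClosure_eq]
    refine Bornology.IsBounded.closure ?_
    exact Metric.isBounded_iff.2 ⟨1 / n, fun y hy z hz => T.gen_dist_le hn b (hbr n hn) α y hy z hz⟩
  have hdiam : ∀ (n : ℕ), 1 ≤ n → ∀ (α : Omega1),
      Metric.diam (T.downClosure (b n) α) ≤ 1 / n :=
    fun n hn α => T.downClosure_diam_le hn b (hbr n hn) α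
  have hdist : ∀ (n : ℕ), 1 ≤ n → ∀ (α : Omega1),
      ∀ y ∈ T.downClosure (b n) α, ∀ z ∈ T.downClosure (b n) α, dist y z ≤ 1 / n := by
    intro n hn α y hy z hz
    exact le_trans (Metric.dist_le_diam_of_mem (hbound n hn α) hy hz) (hdiam n hn α)
  have hCauchy : ∀ α : Omega1, CauchySeq (fun k => b k α) := by
    intro α
    rw [Metric.cauchySeq_iff']
    intro ε hε
    obtain ⟨K, hK⟩ := exists_nat_one_div_lt hε
    refine ⟨K + 1, fun k hk => ?_⟩
    have h1 : dist (b k α) (b (K + 1) α) ≤ 1 / (K + 1 : ℕ) :=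
      hdist (K + 1) (Nat.succ_le_succ (Nat.zero_le K)) α _ (hmemC α _ k hk) _ (hmemC α _ _ le_rfl)
    have h2 : (1 : ℝ) / (K + 1 : ℕ) < ε := by push_cast; push_cast at hK; linarith
    exact lt_of_le_of_lt h1 h2
  have hconv : ∀ α : Omega1, ∃ p : T.X α,
      Filter.Tendsto (fun k => b k α) Filter.atTop (nhds p) :=
    fun α => cauchySeq_tendsto_of_complete (hCauchy α)
  choose x hx using hconv
  have hxmem : ∀ (α : Omega1) (n : ℕ), x α ∈ T.downClosure (b n) α := by
    intro α n
    refine (hclosed n α).mem_of_tendsto (hx α) ?_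
    exact Filter.eventually_atTop.2 ⟨n, fun m hm => hmemC α n m hm⟩
  have hbranch : T.IsBranch x := by
    intro α β h
    have h1 : Filter.Tendsto (fun k => T.proj h (b k β)) Filter.atTop (nhds (T.proj h (x β))) :=
      ((T.proj_lipschitz h).continuous.tendsto _).comp (hx β)
    have h2 : Filter.Tendsto (fun k => T.proj h (b k β)) Filter.atTop (nhds (x α)) := by
      rw [tendsto_iff_dist_tendsto_zero]
      have hb2 : ∀ᶠ k : ℕ in Filter.atTop, dist (T.proj h (b k β)) (x α) ≤ 1 / k := by
        filter_upwards [Filter.eventually_ge_atTop 1] with k hk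
        have hmem : T.proj h (b k β) ∈ T.downClosure (b k) α :=
          subset_closure (T.gen_mapsTo (b k) h (T.mem_gen_self (b k) β))
        exact hdist k hk α _ hmem _ (hxmem α k)
      exact squeeze_zero' (Filter.Eventually.of_forall fun k => dist_nonneg) hb2
        tendsto_one_div_atTop_nhds_zero_nat
    exact tendsto_nhds_unique h1 h2
  refine ⟨fun n α => ⟨⟨b n α, T.mem_downClosure_self (b n) α⟩, hclosed n α, hdec n α⟩,
    hdiam, x, hbranch, fun α => ?_⟩
  refine Set.eq_singleton_iff_unique_mem.2 ⟨Set.mem_iInter.2 (hxmem α), fun y hy => ?_⟩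
  have hd : dist y (x α) ≤ 0 := by
    have hb2 : ∀ᶠ k : ℕ in Filter.atTop, dist y (x α) ≤ 1 / k := by
      filter_upwards [Filter.eventually_ge_atTop 1] with k hk
      exact hdist k hk α y (Set.mem_iInter.1 hy k) _ (hxmem α k)
    exact ge_of_tendsto tendsto_one_div_atTop_nhds_zero_nat hb2
  exact dist_le_zero.1 hd
end
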